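/- arXiv:2605.12148 — 4 statements merged into one kernel-verified Lean document; each statement's English description precedes it below -/
import Mathlib

section
/- Let n = 2^r with r ≥ 2, ν = 2^{r-1} − 1, and define Δ_i as ±C(ν, ⌊i/2⌋) with sign + if i ≡ 0,3 (mod 4) and − if i ≡ 1,2 (mod 4). Then for every even i with 0 < i ≤ n, the integer C(n,i) + (n−1)(Δ_{i−1} + Δ_i) is divisible by n, and for every odd i with 1 ≤ i ≤ n−1, the integer C(n,i) is divisible by n. -/
/-! For odd `i`, `n = 2 ^ r` is coprime to `i`, so `i * C(n, i) = n * C(n - 1, i - 1)` forces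
`n ∣ C(n, i)`. For even `i = 2j`, Pascal's rule gives `Δ_{i-1} + Δ_i = (-1)^j C(m, j)` with
`m = ν + 1 = 2 ^ (r - 1)`, so it suffices that `C(2m, 2j) ≡ (-1)^j C(m, j) (mod n)`. Subtracting
the coefficient of `X^{2j}` in `(1 - X)^m (1 + X)^m = (1 - X²)^m` from Vandermonde's identity
leaves `2 Σ_{a+b=2j, a odd} C(m, a) C(m, b)`; there `b` is odd too, so each term is divisible
by `m²`. -/

open Polynomial Finset

/-- The sequence `Δ_i = ±C(ν, ⌊i/2⌋)`, with sign `+` if `i ≡ 0, 3 (mod 4)`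
and `-` if `i ≡ 1, 2 (mod 4)`. -/
def Delta (ν i : ℕ) : ℤ :=
  if i % 4 = 0 ∨ i % 4 = 3 then (ν.choose (i / 2) : ℤ) else -(ν.choose (i / 2) : ℤ)

theorem Nat.dvd_choose_of_coprime {n k : ℕ} (h : n.Coprime k) : n ∣ n.choose k := by
  rcases k with _ | k
  · simp [(Nat.coprime_zero_right n).mp h]
  rcases n with _ | n
  · simp
  exact h.dvd_of_dvd_mul_right ⟨_, (Nat.add_one_mul_choose_eq n k).symm⟩

theorem coeff_one_sub_X_pow {R : Type*} [CommRing R] (m k : ℕ) :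
    (((1 : R[X]) - X) ^ m).coeff k = (-1) ^ k * (m.choose k : R) := by
  rw [sub_eq_add_neg, add_comm, add_pow, finsetSum_coeff]
  have hterm (i : ℕ) : (-X : R[X]) ^ i * 1 ^ (m - i) * (m.choose i : R[X]) =
      C ((-1) ^ i * (m.choose i : R)) * X ^ i := by
    rw [neg_pow, one_pow, mul_one, C_mul, C_pow, C_neg, C_1, ← C_eq_natCast]; ring
  simp only [hterm, coeff_C_mul_X_pow, sum_ite_eq, mem_range]
  split_ifs with h
  · rfl
  · simp [Nat.choose_eq_zero_of_lt (by omega : m < k)]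

theorem sum_antidiagonal_neg_one_pow_mul_choose_mul_choose (m j : ℕ) :
    ∑ p ∈ antidiagonal (2 * j), (-1 : ℤ) ^ p.1 * m.choose p.1 * m.choose p.2 =
      (-1) ^ j * m.choose j := by
  have h : ((1 : ℤ[X]) - X) ^ m * (1 + X) ^ m = expand ℤ 2 ((1 - X) ^ m) := by
    rw [← mul_pow, map_pow, map_sub, map_one, expand_X]; ring
  have hcoeff := congrArg (coeff · (2 * j)) h
  simp only [coeff_mul, coeff_one_sub_X_pow, coeff_one_add_X_pow, coeff_expand two_pos,
    dvd_mul_right, if_true, Nat.mul_div_cancel_left _ two_pos] at hcoeff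
  simpa [mul_assoc] using hcoeff

theorem choose_two_pow_succ_two_mul_modEq (s j : ℕ) :
    ((2 ^ (s + 1)).choose (2 * j) : ℤ) ≡ (-1) ^ j * (2 ^ s).choose j [ZMOD 2 ^ (2 * s + 1)] := by
  refine (Int.modEq_iff_dvd.mpr ?_).symm
  rw [← sum_antidiagonal_neg_one_pow_mul_choose_mul_choose, pow_succ' 2 s, two_mul (2 ^ s),
    Nat.add_choose_eq]
  push_cast
  rw [← sum_sub_distrib]
  refine dvd_sum fun p hp => ?_
  rcases Nat.even_or_odd p.1 with h1 | h1
  · simp [h1.neg_one_pow]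
  have h2 : Odd p.2 := by
    have hsum := mem_antidiagonal.mp hp
    rcases h1 with ⟨t, ht⟩; exact ⟨j - t - 1, by omega⟩
  obtain ⟨a, ha⟩ := Nat.dvd_choose_of_coprime ((Nat.coprime_two_left.mpr h1).pow_left s)
  obtain ⟨b, hb⟩ := Nat.dvd_choose_of_coprime ((Nat.coprime_two_left.mpr h2).pow_left s)
  rw [h1.neg_one_pow, ha, hb]
  exact ⟨a * b, by push_cast; ring⟩

theorem delta_two_mul_add_one_add_delta_two_mul_succ (ν k : ℕ) :
    Delta ν (2 * k + 1) + Delta ν (2 * (k + 1)) = (-1) ^ (k + 1) * (ν + 1).choose (k + 1) := by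
  have h1 : (2 * k + 1) / 2 = k := by omega
  have h2 : 2 * (k + 1) / 2 = k + 1 := by omega
  rw [Delta, Delta, h1, h2, Nat.choose_succ_succ']
  rcases Nat.even_or_odd' k with ⟨t, rfl | rfl⟩
  · rw [if_neg (by omega), if_neg (by omega), pow_succ, pow_mul]
    push_cast; ring
  · rw [if_pos (by omega), if_pos (by omega), pow_succ, pow_succ, pow_mul]
    push_cast; ring

theorem stmt_6 (r : ℕ) (hr : 2 ≤ r) (n ν : ℕ) (hn : n = 2 ^ r) (hν : ν = 2 ^ (r - 1) - 1) :
    (∀ i : ℕ, Even i → 0 < i → i ≤ n →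
      (n : ℤ) ∣ ((n.choose i : ℤ) + (n - 1) * (Delta ν (i - 1) + Delta ν i))) ∧
    (∀ i : ℕ, Odd i → 1 ≤ i → i ≤ n - 1 → (n : ℤ) ∣ (n.choose i : ℤ)) := by
  obtain ⟨s, rfl⟩ : ∃ s, r = s + 1 := ⟨r - 1, by omega⟩
  have hν' : ν + 1 = 2 ^ s := by
    rw [hν, Nat.add_sub_cancel, Nat.sub_add_cancel Nat.one_le_two_pow]
  subst hn
  refine ⟨fun i hi hi0 _ => ?_, fun i hi _ _ => ?_⟩
  · obtain ⟨k, rfl⟩ : ∃ k, i = 2 * (k + 1) := by obtain ⟨t, rfl⟩ := hi; exact ⟨t - 1, by omega⟩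
    rw [show 2 * (k + 1) - 1 = 2 * k + 1 by omega, delta_two_mul_add_one_add_delta_two_mul_succ,
      hν']
    have hmod := (choose_two_pow_succ_two_mul_modEq s (k + 1)).dvd
    push_cast
    rw [show ∀ C D N : ℤ, C + (N - 1) * D = N * D - (D - C) from fun _ _ _ => by ring]
    exact dvd_sub (dvd_mul_right _ _) ((pow_dvd_pow 2 (by omega)).trans hmod)
  · exact_mod_cast Nat.dvd_choose_of_coprime ((Nat.coprime_two_left.mpr hi).pow_left _)
end

section
/- Let C ⊆ 𝔽₂^{2ν+1} be a perfect code of length n−1 = 2ν+1 (minimum distance 3, covering radius 1) containing the all-zero word, where n = 2ν+2 = 2^r. Then the number of codewords of C of weight i equals (C(n−1, i) + (n−1)·Δ_i)/n, where Δ_i = C(ν, ⌊i/2⌋) if i ≡ 0,3 (mod 4) and Δ_i = −C(ν, ⌊i/2⌋) if i ≡ 1,2 (mod 4). -/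
/-!
Write `m = 2ν + 1 = n - 1` and `A_i` for the number of codewords of weight `i`. The radius-one
balls around the codewords partition the words of weight `j + 1`, and the ball around a codeword
of weight `j`, `j + 1`, `j + 2` contains `m - j`, `1`, `j + 2` of them (and none otherwise), so
`(j + 2) A_{j+2} + A_{j+1} + (m - j) A_j = C(m, j + 1)`, with `A_0 = 1` and `A_1 = 0`.
The sequence `(C(m, i) + m Δ_i) / n` obeys the same recurrence with the same initial values:
`(j + 2) C(m, j + 2) + C(m, j + 1) + (m - j) C(m, j) = n C(m, j + 1)`, while `Δ_i`, the
coefficient of `x^i` in `(1 - x) (1 - x²)^ν`, satisfies the homogeneous recurrence. As `j + 2`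
never vanishes, the recurrence determines the sequence.
-/

open Finset

lemma delta_two_mul (ν k : ℕ) : Delta ν (2 * k) = (-1) ^ k * ν.choose k := by
  rcases Nat.even_or_odd' k with ⟨a, rfl | rfl⟩
  · simp [Delta, pow_mul, show 2 * (2 * a) % 4 = 0 by omega]
  · simp [Delta, pow_succ, pow_mul, show 2 * (2 * a + 1) % 4 = 2 by omega,
      show 2 * (2 * a + 1) / 2 = 2 * a + 1 by omega]

lemma delta_two_mul_add_one (ν k : ℕ) : Delta ν (2 * k + 1) = -Delta ν (2 * k) := by
  rcases Nat.even_or_odd' k with ⟨a, rfl | rfl⟩ <;>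
    simp [Delta, show ∀ t, (2 * t + 1) / 2 = t by omega, show ∀ t, 2 * t / 2 = t by omega] <;>
    omega

lemma succ_mul_choose_succ (n k : ℕ) :
    ((k : ℤ) + 1) * n.choose (k + 1) = ((n : ℤ) - k) * n.choose k := by
  rcases le_or_gt k n with h | h
  · have := Nat.choose_succ_right_eq n k
    zify [h] at this
    linarith
  · simp [Nat.choose_eq_zero_of_lt h, Nat.choose_eq_zero_of_lt (Nat.lt_succ_of_lt h)]

lemma delta_recurrence (ν j : ℕ) :
    ((j : ℤ) + 2) * Delta ν (j + 2) + Delta ν (j + 1) + (2 * ν + 1 - j) * Delta ν j = 0 := by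
  rcases Nat.even_or_odd' j with ⟨k, rfl | rfl⟩
  · rw [show 2 * k + 2 = 2 * (k + 1) by ring, delta_two_mul_add_one, delta_two_mul,
      delta_two_mul]
    have := succ_mul_choose_succ ν k
    push_cast
    linear_combination (-2 * (-1) ^ k) * this
  · rw [show 2 * k + 1 + 2 = 2 * (k + 1) + 1 by ring, show 2 * k + 1 + 1 = 2 * (k + 1) by ring,
      delta_two_mul_add_one, delta_two_mul_add_one, delta_two_mul, delta_two_mul]
    have := succ_mul_choose_succ ν k
    push_cast
    linear_combination (2 * (-1) ^ k) * this

lemma choose_recurrence (m j : ℕ) :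
    ((j : ℤ) + 2) * m.choose (j + 2) + m.choose (j + 1) + (m - j) * m.choose j =
      (m + 1) * m.choose (j + 1) := by
  have h₁ := succ_mul_choose_succ m j
  have h₂ := succ_mul_choose_succ m (j + 1)
  push_cast at h₂
  linear_combination h₂ - h₁

lemma eq_of_recurrence {u v : ℕ → ℤ} (a : ℕ → ℤ) (h₀ : u 0 = v 0) (h₁ : u 1 = v 1)
    (h : ∀ j : ℕ, (j + 2) * u (j + 2) + u (j + 1) + a j * u j =
      (j + 2) * v (j + 2) + v (j + 1) + a j * v j) : u = v := by
  funext i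
  induction i using Nat.twoStepInduction with
  | zero => exact h₀
  | one => exact h₁
  | more j hj hj₁ =>
    have := h j
    rw [hj, hj₁, add_left_inj, add_left_inj] at this
    exact mul_left_cancel₀ (by positivity) this

section BinaryWords

variable {ι : Type*}

lemma ZMod.two_ne_zero_iff (a : ZMod 2) : a ≠ 0 ↔ a = 1 := by revert a; decide

lemma add_single_one_injective [DecidableEq ι] (c : ι → ZMod 2) :
    Function.Injective fun k => c + Pi.single k (1 : ZMod 2) := by
  intro k k' h
  by_contra hne
  simpa [Pi.single_apply, hne] using congrFun (add_left_cancel h) k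

variable [Fintype ι]

lemma card_filter_eq_zero_add_hammingNorm {β : Type*} [Zero β] [DecidableEq β] (c : ι → β) :
    #{k | c k = 0} + hammingNorm c = Fintype.card ι :=
  card_filter_add_card_filter_not _

variable [DecidableEq ι]

lemma card_filter_hammingNorm_eq (i : ℕ) :
    #{x : ι → ZMod 2 | hammingNorm x = i} = (Fintype.card ι).choose i := by
  rw [← card_univ, ← card_powersetCard]
  refine card_nbij' (fun x => ({k | x k ≠ 0} : Finset ι)) (fun s k => if k ∈ s then 1 else 0)
    ?_ ?_ ?_ ?_
  · intro x hx
    simpa [mem_powersetCard, hammingNorm] using hx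
  · intro s hs
    simp only [coe_filter, mem_univ, true_and, mem_coe, mem_powersetCard] at hs ⊢
    rw [← hs.2]
    unfold hammingNorm
    congr 1
    ext k
    simp
  · intro x _
    ext k
    rcases em (x k = 0) with h | h
    · simp [h]
    · simp [(ZMod.two_ne_zero_iff _).1 h]
  · intro s _
    ext k
    by_cases h : k ∈ s <;> simp [h]

lemma hammingNorm_eq_one_iff {y : ι → ZMod 2} :
    hammingNorm y = 1 ↔ ∃ k, y = Pi.single k 1 := by
  refine card_eq_one.trans (exists_congr fun k => ?_)
  simp only [Finset.ext_iff, funext_iff, mem_filter, mem_univ, true_and, mem_singleton,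
    ZMod.two_ne_zero_iff, Pi.single_apply]
  refine forall_congr' fun i => ?_
  split_ifs with h
  · simp [h]
  · rw [← not_iff_not, ← ne_eq, ZMod.two_ne_zero_iff]; simp [h]

lemma hammingDist_eq_one_iff {x c : ι → ZMod 2} :
    hammingDist x c = 1 ↔ ∃ k, x = c + Pi.single k 1 := by
  rw [hammingDist_comm, hammingDist_eq_hammingNorm, hammingNorm_eq_one_iff]
  simp only [neg_add_eq_iff_eq_add]

lemma hammingNorm_add_single_of_eq_zero {c : ι → ZMod 2} {k : ι} (hc : c k = 0) :
    hammingNorm (c + Pi.single k 1) = hammingNorm c + 1 := by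
  have : hammingNorm (c + Pi.single k 1) = #(insert k ({i | c i ≠ 0} : Finset ι)) := by
    unfold hammingNorm
    congr 1
    ext i
    by_cases hi : i = k
    · subst hi; simp [hc]
    · simp [hi]
  rw [this, card_insert_of_notMem (by simp [hc]), hammingNorm]

lemma hammingNorm_add_single_of_ne_zero {c : ι → ZMod 2} {k : ι} (hc : c k ≠ 0) :
    hammingNorm (c + Pi.single k 1) + 1 = hammingNorm c := by
  -- `c` is obtained from `c + e_k`, whose `k`-th coordinate vanishes, by adding `e_k` again.
  have hk : (c + Pi.single k 1 : ι → ZMod 2) k = 0 := by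
    simp [(ZMod.two_ne_zero_iff _).1 hc]; decide
  rw [← hammingNorm_add_single_of_eq_zero hk, add_assoc, ← Pi.single_add]
  simp [show (1 + 1 : ZMod 2) = 0 by decide]

lemma filter_hammingDist_le_one (c : ι → ZMod 2) :
    ({x | hammingDist x c ≤ 1} : Finset _) =
      insert c (univ.image fun k => c + Pi.single k (1 : ZMod 2)) := by
  ext x
  have : hammingDist x c ≤ 1 ↔ x = c ∨ hammingDist x c = 1 := by
    rw [← hammingDist_eq_zero]; omega
  simp only [mem_filter, mem_univ, true_and, mem_insert, mem_image, this, hammingDist_eq_one_iff]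
  simp only [eq_comm (a := x)]

lemma card_filter_hammingNorm_add_single (c : ι → ZMod 2) (j : ℕ) :
    (#{k | hammingNorm (c + Pi.single k (1 : ZMod 2)) = j + 1} : ℤ) =
      (if hammingNorm c = j then (Fintype.card ι - j : ℤ) else 0) +
        if hammingNorm c = j + 2 then (j + 2 : ℤ) else 0 := by
  have hiff : ∀ k, hammingNorm (c + Pi.single k 1) = j + 1 ↔
      c k = 0 ∧ hammingNorm c = j ∨ c k ≠ 0 ∧ hammingNorm c = j + 2 := by
    intro k
    by_cases hk : c k = 0
    · simp [hk, hammingNorm_add_single_of_eq_zero hk]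
    · have := hammingNorm_add_single_of_ne_zero hk
      simp only [hk, false_and, ne_eq, not_false_eq_true, true_and, false_or]
      omega
  rw [filter_congr fun k _ => hiff k, filter_or,
    card_union_of_disjoint (disjoint_filter.2 fun k _ h h' => h'.1 h.1)]
  have hzero : (#{k | c k = 0} : ℤ) = Fintype.card ι - hammingNorm c := by
    rw [← card_filter_eq_zero_add_hammingNorm c]; push_cast; ring
  by_cases h : hammingNorm c = j
  · subst h; simp [hzero]
  by_cases h' : hammingNorm c = j + 2
  · simp [h']
    exact_mod_cast h'
  · simp [h, h']

lemma card_filter_hammingNorm_eq_and_hammingDist_le_one (c : ι → ZMod 2) (j : ℕ) :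
    (#{x | hammingNorm x = j + 1 ∧ hammingDist x c ≤ 1} : ℤ) =
      (if hammingNorm c = j then (Fintype.card ι - j : ℤ) else 0) +
        (if hammingNorm c = j + 1 then 1 else 0) +
        if hammingNorm c = j + 2 then (j + 2 : ℤ) else 0 := by
  have hc : c ∉ univ.image fun k => c + Pi.single k (1 : ZMod 2) := by
    simp [funext_iff, Pi.single_apply]
  have hball : ({x | hammingNorm x = j + 1 ∧ hammingDist x c ≤ 1} : Finset _) =
      {x ∈ insert c (univ.image fun k => c + Pi.single k 1) | hammingNorm x = j + 1} := by
    rw [← filter_hammingDist_le_one, filter_filter]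
    simp only [and_comm]
  rw [hball, filter_insert, filter_image, apply_ite card,
    card_insert_of_notMem fun hm => hc (image_subset_image (filter_subset _ _) hm),
    card_image_of_injective _ (add_single_one_injective c)]
  push_cast
  rw [card_filter_hammingNorm_add_single]
  split_ifs <;> omega

end BinaryWords

section HammingBall

variable {ι : Type*} [Fintype ι] {β : ι → Type*} [∀ i, DecidableEq (β i)]
  {C : Finset (∀ i, β i)}

lemma card_filter_hammingDist_le_one_eq_one
    (hmin : ∀ c₁ ∈ C, ∀ c₂ ∈ C, c₁ ≠ c₂ → 3 ≤ hammingDist c₁ c₂)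
    (hcov : ∀ x, ∃ c ∈ C, hammingDist x c ≤ 1) (x : ∀ i, β i) :
    #{c ∈ C | hammingDist x c ≤ 1} = 1 := by
  obtain ⟨c, hc, hxc⟩ := hcov x
  refine card_eq_one.2 ⟨c, eq_singleton_iff_unique_mem.2 ⟨mem_filter.2 ⟨hc, hxc⟩, ?_⟩⟩
  intro c' hc'
  rw [mem_filter] at hc'
  by_contra hne
  have := hammingDist_triangle_left c' c x
  have := hmin c' hc'.1 c hc hne
  omega

lemma card_eq_sum_card_filter_hammingDist_le_one
    (hmin : ∀ c₁ ∈ C, ∀ c₂ ∈ C, c₁ ≠ c₂ → 3 ≤ hammingDist c₁ c₂)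
    (hcov : ∀ x, ∃ c ∈ C, hammingDist x c ≤ 1) (s : Finset (∀ i, β i)) :
    #s = ∑ c ∈ C, #{x ∈ s | hammingDist x c ≤ 1} := by
  have := sum_card_bipartiteAbove_eq_sum_card_bipartiteBelow
    (fun c x => hammingDist x c ≤ 1) (s := C) (t := s)
  simp only [bipartiteAbove, bipartiteBelow,
    card_filter_hammingDist_le_one_eq_one hmin hcov, sum_const, smul_eq_mul, mul_one] at this
  exact this.symm

end HammingBall

def weightDistribution {ι : Type*} [Fintype ι] {β : ι → Type*} [∀ i, Zero (β i)]
    [∀ i, DecidableEq (β i)] (C : Finset (∀ i, β i)) (w : ℕ) : ℕ :=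
  #{c ∈ C | hammingNorm c = w}

section WeightDistribution

variable {ι : Type*} [Fintype ι] {β : ι → Type*} [∀ i, Zero (β i)]
  [∀ i, DecidableEq (β i)] {C : Finset (∀ i, β i)}

lemma weightDistribution_zero (h₀ : 0 ∈ C) : weightDistribution C 0 = 1 := by
  rw [weightDistribution, card_eq_one]
  exact ⟨0, by ext c; simpa [hammingNorm_eq_zero] using fun h => h ▸ h₀⟩

lemma weightDistribution_one (h₀ : 0 ∈ C)
    (hmin : ∀ c₁ ∈ C, ∀ c₂ ∈ C, c₁ ≠ c₂ → 2 ≤ hammingDist c₁ c₂) :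
    weightDistribution C 1 = 0 := by
  rw [weightDistribution, card_eq_zero, filter_eq_empty_iff]
  intro c hc hc₁
  have hne : c ≠ 0 := by rintro rfl; simp at hc₁
  have := hmin c hc 0 h₀ hne
  rw [hammingDist_zero_right] at this
  omega

end WeightDistribution

lemma weightDistribution_recurrence {ι : Type*} [Fintype ι] [DecidableEq ι]
    {C : Finset (ι → ZMod 2)}
    (hmin : ∀ c₁ ∈ C, ∀ c₂ ∈ C, c₁ ≠ c₂ → 3 ≤ hammingDist c₁ c₂)
    (hcov : ∀ x, ∃ c ∈ C, hammingDist x c ≤ 1) (j : ℕ) :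
    ((j : ℤ) + 2) * weightDistribution C (j + 2) + weightDistribution C (j + 1) +
      (Fintype.card ι - j) * weightDistribution C j = (Fintype.card ι).choose (j + 1) := by
  rw [← card_filter_hammingNorm_eq, card_eq_sum_card_filter_hammingDist_le_one hmin hcov]
  push_cast
  simp only [filter_filter, card_filter_hammingNorm_eq_and_hammingDist_le_one, sum_add_distrib,
    ← sum_filter, sum_const, nsmul_eq_mul, weightDistribution]
  ring

theorem stmt_7_general (ν n : ℕ) (hn : n = 2 * ν + 2)
    (C : Finset (Fin (2 * ν + 1) → ZMod 2)) (h0 : (0 : Fin (2 * ν + 1) → ZMod 2) ∈ C)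
    (hmin : ∀ c₁ ∈ C, ∀ c₂ ∈ C, c₁ ≠ c₂ → 3 ≤ hammingDist c₁ c₂)
    (hcov : ∀ x : Fin (2 * ν + 1) → ZMod 2, ∃ c ∈ C, hammingDist x c ≤ 1) :
    ∀ i : ℕ, (((C.filter fun c => hammingNorm c = i).card : ℤ)) * n =
      ((n - 1).choose i : ℤ) + (n - 1) * Delta ν i := by
  subst hn
  have hmin₂ : ∀ c₁ ∈ C, ∀ c₂ ∈ C, c₁ ≠ c₂ → 2 ≤ hammingDist c₁ c₂ :=
    fun c₁ h₁ c₂ h₂ h => (hmin c₁ h₁ c₂ h₂ h).trans' (by norm_num)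
  have key : (fun i => (weightDistribution C i : ℤ) * (2 * ν + 2)) =
      fun i => ((2 * ν + 1).choose i : ℤ) + (2 * ν + 1) * Delta ν i := by
    refine eq_of_recurrence (fun j => 2 * ν + 1 - j) ?_ ?_ fun j => ?_
    · simp [weightDistribution_zero h0, Delta]; ring
    · simp [weightDistribution_one h0 hmin₂, Delta]
    · have hA := weightDistribution_recurrence hmin hcov j
      have hΔ := delta_recurrence ν j
      have hb := choose_recurrence (2 * ν + 1) j
      simp only [Fintype.card_fin] at hA
      push_cast at hA hb ⊢
      linear_combination (2 * (ν : ℤ) + 2) * hA - hb - (2 * ν + 1) * hΔ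
  intro i
  rw [show 2 * ν + 2 - 1 = 2 * ν + 1 by omega]
  push_cast
  exact (congrFun key i).trans (by ring)

theorem stmt_7 (r ν n : ℕ) (hr : 2 ≤ r) (hn : n = 2 * ν + 2) (hn2 : n = 2 ^ r)
    (C : Finset (Fin (2 * ν + 1) → ZMod 2)) (h0 : (0 : Fin (2 * ν + 1) → ZMod 2) ∈ C)
    (hmin : ∀ c₁ ∈ C, ∀ c₂ ∈ C, c₁ ≠ c₂ → 3 ≤ hammingDist c₁ c₂)
    (hcov : ∀ x : Fin (2 * ν + 1) → ZMod 2, ∃ c ∈ C, hammingDist x c ≤ 1) :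
    ∀ i : ℕ, (((C.filter fun c => hammingNorm c = i).card : ℤ)) * n =
      ((n - 1).choose i : ℤ) + (n - 1) * Delta ν i :=
  stmt_7_general ν n hn C h0 hmin hcov
end

section
/- Let C ⊆ 𝔽₂ᵐ be a diamond code: every codeword has exactly 2 codewords at Hamming distance 1 from it, and every non-codeword has exactly 1 codeword at distance 1 from it. Then C contains equally many codewords of even Hamming weight as of odd Hamming weight. -/
/-!
Two words at Hamming distance 1 have weights of opposite parity, so every edge of the
distance-1 graph on `C` joins an even-weight codeword to an odd-weight one. That graph is
2-regular on `C`, so counting its edges from either side gives `2 · #even = 2 · #odd`.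
-/

open Finset

theorem hammingNorm_cast_zmod_two {ι : Type*} [Fintype ι] (x : ι → ZMod 2) :
    (hammingNorm x : ZMod 2) = ∑ i, x i := by
  rw [hammingNorm, card_filter]
  push_cast
  refine sum_congr rfl fun i _ => ?_
  generalize x i = a
  revert a
  decide

theorem hammingDist_cast_zmod_two {ι : Type*} [Fintype ι] (x y : ι → ZMod 2) :
    (hammingDist x y : ZMod 2) = hammingNorm x + hammingNorm y := by
  rw [hammingDist_eq_hammingNorm, hammingNorm_cast_zmod_two, hammingNorm_cast_zmod_two,
    hammingNorm_cast_zmod_two, ← sum_add_distrib]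
  refine sum_congr rfl fun i _ => ?_
  rw [Pi.add_apply, Pi.neg_apply, ZMod.neg_eq_self_mod_two, add_comm]

theorem even_hammingNorm_iff_not_of_hammingDist_eq_one {ι : Type*} [Fintype ι]
    {x y : ι → ZMod 2} (h : hammingDist x y = 1) :
    Even (hammingNorm x) ↔ ¬Even (hammingNorm y) := by
  have hsum : ((hammingNorm x + hammingNorm y : ℕ) : ZMod 2) = 1 := by
    rw [Nat.cast_add, ← hammingDist_cast_zmod_two, h, Nat.cast_one]
  have hodd : ¬Even (hammingNorm x + hammingNorm y) := by
    rw [← ZMod.natCast_eq_zero_iff_even, hsum]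
    decide
  rw [Nat.even_add] at hodd
  tauto

theorem card_filter_eq_card_filter_not_of_regular {α : Type*} (s : Finset α)
    (r : α → α → Prop) [DecidableRel r] (p : α → Prop) [DecidablePred p]
    (hr : ∀ a b, r a b → r b a) (hp : ∀ a b, r a b → (p a ↔ ¬p b)) {k : ℕ} (hk : k ≠ 0)
    (hdeg : ∀ a ∈ s, #{b ∈ s | r a b} = k) :
    #{a ∈ s | p a} = #{a ∈ s | ¬p a} := by
  have hnbrs : ∀ a ∈ s, ∀ q : α → Prop, [DecidablePred q] → (∀ b, r a b → q b) →
      #{b ∈ s | q b ∧ r a b} = k := by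
    intro a ha q _ hq
    rw [← hdeg a ha]
    congr 1
    exact filter_congr fun b _ => ⟨And.right, fun hab => ⟨hq b hab, hab⟩⟩
  have hdeg_pos : ∀ a ∈ {a ∈ s | p a}, #(bipartiteAbove r {a ∈ s | ¬p a} a) = k := by
    intro a ha
    rw [mem_filter] at ha
    rw [bipartiteAbove, filter_filter]
    exact hnbrs a ha.1 _ fun b hab => (hp a b hab).1 ha.2
  have hdeg_neg : ∀ b ∈ {a ∈ s | ¬p a}, #(bipartiteBelow r {a ∈ s | p a} b) = k := by
    intro b hb
    rw [mem_filter] at hb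
    rw [bipartiteBelow, filter_filter]
    simp_rw [fun a => (⟨hr a b, hr b a⟩ : r a b ↔ r b a)]
    exact hnbrs b hb.1 _ fun a hba => by
      have := hp a b (hr b a hba)
      tauto
  exact Nat.eq_of_mul_eq_mul_right (Nat.pos_of_ne_zero hk)
    (card_mul_eq_card_mul r hdeg_pos hdeg_neg)

theorem stmt_10_general (m : ℕ) (C : Finset (Fin m → ZMod 2))
    (h11 : ∀ c ∈ C, (C.filter fun c' => hammingDist c c' = 1).card = 2) :
    (C.filter fun c => Even (hammingNorm c)).card
      = (C.filter fun c => Odd (hammingNorm c)).card := by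
  simp_rw [← Nat.not_even_iff_odd]
  exact card_filter_eq_card_filter_not_of_regular C (fun x y => hammingDist x y = 1) _
    (fun x y h => (hammingDist_comm y x).trans h)
    (fun _ _ h => even_hammingNorm_iff_not_of_hammingDist_eq_one h) two_ne_zero h11

theorem stmt_10 (m : ℕ) (C : Finset (Fin m → ZMod 2))
    (h11 : ∀ c ∈ C, (C.filter fun c' => hammingDist c c' = 1).card = 2)
    (h21 : ∀ x : Fin m → ZMod 2, x ∉ C → (C.filter fun c => hammingDist x c = 1).card = 1) :
    (C.filter fun c => Even (hammingNorm c)).card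
      = (C.filter fun c => Odd (hammingNorm c)).card :=
  stmt_10_general m C h11
end

section
/- Let n = 2^r with r ≥ 2, ν = 2^{r−1} − 1, and Δ_i defined as ±C(ν, ⌊i/2⌋) with sign + if i ≡ 0,3 (mod 4) and − if i ≡ 1,2 (mod 4). Then for every even i with 2 ≤ i ≤ n−2, the integer C(n,i) − (Δ_{i−1} + Δ_i) is divisible by n. -/
open Polynomial

theorem prime_dvd_one_add_X_pow_sub (p : ℕ) [Fact p.Prime] :
    (p : ℤ[X]) ∣ (1 + X) ^ p - (1 + X ^ p) := by
  rw [← C_eq_natCast, C_dvd_iff_dvd_coeff]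
  intro i
  rw [← ZMod.intCast_zmod_eq_zero_iff_dvd, ← eq_intCast (Int.castRingHom (ZMod p)), ← coeff_map]
  simp [add_pow_char]

theorem prime_pow_succ_dvd_choose_mul_sub_choose (p : ℕ) [Fact p.Prime] (k j : ℕ) :
    (p : ℤ) ^ (k + 1) ∣ ((p ^ (k + 1)).choose (p * j) : ℤ) - (p ^ k).choose j := by
  have h := dvd_sub_pow_of_dvd_sub (prime_dvd_one_add_X_pow_sub p) k
  rw [← pow_mul, ← pow_succ', ← C_eq_natCast, ← map_pow, C_dvd_iff_dvd_coeff] at h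
  have hexpand : (1 + X ^ p : ℤ[X]) ^ p ^ k = expand ℤ p ((1 + X) ^ p ^ k) := by simp
  simpa only [coeff_sub, coeff_one_add_X_pow, hexpand,
    coeff_expand_mul' (Fact.out : p.Prime).pos] using h (p * j)

theorem Nat.Coprime.dvd_choose {m j : ℕ} (h : m.Coprime j) : m ∣ m.choose j := by
  rcases m with _ | m
  · simp [(Nat.coprime_zero_left j).mp h]
  rcases j with _ | j
  · simp [(Nat.coprime_zero_right _).mp h]
  exact h.dvd_of_dvd_mul_right ⟨_, (Nat.add_one_mul_choose_eq m j).symm⟩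

theorem two_pow_succ_dvd_one_sub_neg_one_pow_mul_choose (k j : ℕ) :
    (2 : ℤ) ^ (k + 1) ∣ (1 - (-1) ^ j) * (2 ^ k).choose j := by
  rcases Nat.even_or_odd j with hj | hj
  · simp [hj.neg_one_pow]
  · rw [hj.neg_one_pow, pow_succ', show (1 : ℤ) - -1 = 2 by norm_num]
    exact mul_dvd_mul_left 2 <| mod_cast
      (Nat.Coprime.pow_left k (Nat.coprime_two_left.mpr hj)).dvd_choose

theorem Delta_two_mul_sub_one_add_Delta_two_mul (ν : ℕ) {j : ℕ} (hj : 1 ≤ j) :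
    Delta ν (2 * j - 1) + Delta ν (2 * j) = (-1) ^ j * (ν + 1).choose j := by
  obtain ⟨j, rfl⟩ := Nat.exists_eq_add_of_le' hj
  have h₁ : (2 * (j + 1) - 1) / 2 = j := by omega
  have h₂ : 2 * (j + 1) / 2 = j + 1 := by omega
  rcases Nat.even_or_odd j with hj | hj
  · have hmod : ¬ (2 * (j + 1) - 1) % 4 = 0 ∧ ¬ (2 * (j + 1) - 1) % 4 = 3 ∧
        ¬ (2 * (j + 1)) % 4 = 0 ∧ ¬ (2 * (j + 1)) % 4 = 3 := by
      obtain ⟨t, rfl⟩ := hj; omega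
    simp [Delta, hmod, h₁, h₂, Nat.choose_succ_succ', pow_succ, hj.neg_one_pow]
    ring
  · have hmod : ¬ (2 * (j + 1) - 1) % 4 = 0 ∧ (2 * (j + 1) - 1) % 4 = 3 ∧
        (2 * (j + 1)) % 4 = 0 := by
      obtain ⟨t, rfl⟩ := hj; omega
    simp [Delta, hmod, h₁, h₂, Nat.choose_succ_succ', pow_succ, hj.neg_one_pow]

theorem stmt_19 (r : ℕ) (hr : 2 ≤ r) (n ν : ℕ) (hn : n = 2 ^ r) (hν : ν = 2 ^ (r - 1) - 1) :
    ∀ i : ℕ, Even i → 2 ≤ i → i ≤ n - 2 →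
      (n : ℤ) ∣ ((n.choose i : ℤ) - (Delta ν (i - 1) + Delta ν i)) := by
  rintro i ⟨j, rfl⟩ hi -
  obtain ⟨k, rfl⟩ : ∃ k, r = k + 1 := ⟨r - 1, by omega⟩
  have hm : ν + 1 = 2 ^ k := by rw [hν, Nat.add_sub_cancel, Nat.sub_add_cancel Nat.one_le_two_pow]
  rw [← two_mul, Delta_two_mul_sub_one_add_Delta_two_mul ν (by omega), hm, hn]
  push_cast
  rw [show ∀ a b : ℤ, a - (-1) ^ j * b = (a - b) + (1 - (-1) ^ j) * b from fun a b => by ring]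
  exact_mod_cast (prime_pow_succ_dvd_choose_mul_sub_choose 2 k j).add
    (two_pow_succ_dvd_one_sub_neg_one_pow_mul_choose k j)
end
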